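/- Let m ≥ 1. Let Δ = {v : ZMod m → ℝ | v(j) ≥ 0 for all j and Σ_j v(j) = 1} be the standard (m−1)-simplex with its subspace topology from ℝ^{ZMod m}, let ∂Δ ⊂ Δ be the subset of points with at least one coordinate equal to 0, and let the cyclic group ZMod m act on Δ by permuting coordinates cyclically (a · v = (j ↦ v(j − a))); this action preserves ∂Δ. Let V = {v : ZMod m → ℝ | Σ_j v(j) = 0} with the same cyclic permutation action. Then there exists a homeomorphism from the quotient space Δ/∂Δ (the quotient of Δ collapsing ∂Δ to a point) to the one-point compactification of V, which is equivariant for the induced ZMod m-actions (the action on the one-point compactification fixing the point at infinity). -/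
import Mathlib


open OnePoint

/-- The standard (m−1)-simplex Δ in ℝ^{ZMod m}. -/
def simplexSet (m : ℕ) [NeZero m] : Set (ZMod m → ℝ) :=
  {v | (∀ j, 0 ≤ v j) ∧ ∑ j, v j = 1}

/-- The boundary ∂Δ ⊂ Δ: points with at least one coordinate equal to 0. -/
def boundarySet (m : ℕ) [NeZero m] : Set (ZMod m → ℝ) :=
  {v ∈ simplexSet m | ∃ j, v j = 0}

/-- The reduced regular representation V: functions ZMod m → ℝ with coordinate sum 0. -/
abbrev sumZero (m : ℕ) [NeZero m] : Type := {v : ZMod m → ℝ // ∑ j, v j = 0}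

/-- The relation on Δ ⊔ {∞} (i.e. `OnePoint ↥Δ`, which carries the coproduct topology since Δ
is compact) which identifies all points of ∂Δ together with the extra point ∞; the quotient
`Quot (collapseRel m)` is the quotient Δ/∂Δ of Δ collapsing ∂Δ to a point (with the convention
that an extra base point is added, which matters only when ∂Δ is empty). -/
def collapseRel (m : ℕ) [NeZero m] : OnePoint (simplexSet m) → OnePoint (simplexSet m) → Prop :=
  fun u u' =>
    (u = ∞ ∨ ∃ x : simplexSet m, u = (x : OnePoint (simplexSet m)) ∧
        (x : ZMod m → ℝ) ∈ boundarySet m) ∧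
    (u' = ∞ ∨ ∃ x : simplexSet m, u' = (x : OnePoint (simplexSet m)) ∧
        (x : ZMod m → ℝ) ∈ boundarySet m)

namespace Stmt13Aux

open Real Set Filter

variable (m : ℕ) [NeZero m]

lemma mpos : (0:ℝ) < m := by
  have := Nat.pos_of_ne_zero (NeZero.ne m)
  exact_mod_cast this

/-- logarithmic chart -/
noncomputable def Lfun (v : ZMod m → ℝ) : ZMod m → ℝ :=
  fun j => Real.log (v j) - (∑ k, Real.log (v k)) / m

lemma sum_Lfun (v : ZMod m → ℝ) : ∑ j, Lfun m v j = 0 := by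
  have hm : (m:ℝ) ≠ 0 := (mpos m).ne'
  simp only [Lfun, Finset.sum_sub_distrib, Finset.sum_const, Finset.card_univ, ZMod.card,
    nsmul_eq_mul]
  rw [mul_div_cancel₀ _ hm, sub_self]

noncomputable def Lmap (x : simplexSet m) : sumZero m :=
  ⟨Lfun m x.1, sum_Lfun m x.1⟩

noncomputable def expSum (w : ZMod m → ℝ) : ℝ := ∑ k, Real.exp (w k)

lemma expSum_pos (w : ZMod m → ℝ) : 0 < expSum m w :=
  Finset.sum_pos (fun k _ => Real.exp_pos _) Finset.univ_nonempty

/-- the softmax inverse chart -/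
noncomputable def smax (w : sumZero m) : simplexSet m :=
  ⟨fun j => Real.exp (w.1 j) / expSum m w.1,
    ⟨fun j => le_of_lt (div_pos (Real.exp_pos _) (expSum_pos m w.1)),
      by rw [← Finset.sum_div]; exact div_self (expSum_pos m w.1).ne'⟩⟩

lemma smax_pos (w : sumZero m) : ∀ j, (smax m w).1 j ≠ 0 :=
  fun j => (div_pos (Real.exp_pos _) (expSum_pos m w.1)).ne'

lemma L_smax (w : sumZero m) : Lmap m (smax m w) = w := by
  have hS := expSum_pos m w.1
  have hm : (m:ℝ) ≠ 0 := (mpos m).ne'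
  apply Subtype.ext
  funext j
  have hlog : ∀ k, Real.log ((smax m w).1 k) = w.1 k - Real.log (expSum m w.1) := by
    intro k
    show Real.log (Real.exp (w.1 k) / expSum m w.1) = _
    rw [Real.log_div (Real.exp_ne_zero _) hS.ne', Real.log_exp]
  show Lfun m (smax m w).1 j = w.1 j
  unfold Lfun
  simp only [hlog]
  rw [Finset.sum_sub_distrib, w.2, Finset.sum_const, Finset.card_univ, ZMod.card,
    nsmul_eq_mul, zero_sub, neg_div, mul_div_cancel_left₀ _ hm]
  ring

lemma smax_L (x : simplexSet m) (h : ∀ j, x.1 j ≠ 0) : smax m (Lmap m x) = x := by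
  have hpos : ∀ j, 0 < x.1 j := fun j => lt_of_le_of_ne (x.2.1 j) (Ne.symm (h j))
  apply Subtype.ext
  funext j
  have hexp : ∀ k, Real.exp ((Lmap m x).1 k)
      = x.1 k * Real.exp (-((∑ k, Real.log (x.1 k)) / m)) := by
    intro k
    show Real.exp (Real.log (x.1 k) - (∑ k, Real.log (x.1 k)) / m) = _
    rw [Real.exp_sub, Real.exp_log (hpos k), Real.exp_neg, div_eq_mul_inv]
  have hE : expSum m (Lmap m x).1 = Real.exp (-((∑ k, Real.log (x.1 k)) / m)) := by
    unfold expSum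
    simp only [hexp]
    rw [← Finset.sum_mul, x.2.2, one_mul]
  show Real.exp ((Lmap m x).1 j) / expSum m (Lmap m x).1 = x.1 j
  rw [hexp, hE, mul_div_assoc, div_self (Real.exp_ne_zero _), mul_one]

open scoped Classical in
/-- the collapsing map -/
noncomputable def fmap : OnePoint (simplexSet m) → OnePoint (sumZero m) :=
  fun u => u.elim ∞
    (fun x => if (∀ j, x.1 j ≠ 0) then ((Lmap m x : sumZero m) : OnePoint (sumZero m)) else ∞)

lemma fmap_infty : fmap m ∞ = ∞ := rfl

lemma fmap_coe_pos (x : simplexSet m) (h : ∀ j, x.1 j ≠ 0) :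
    fmap m (x : OnePoint (simplexSet m)) = ((Lmap m x : sumZero m) : OnePoint (sumZero m)) := by
  show (if (∀ j, x.1 j ≠ 0) then _ else _) = _
  rw [if_pos h]

lemma fmap_coe_zero (x : simplexSet m) (h : ¬ (∀ j, x.1 j ≠ 0)) :
    fmap m (x : OnePoint (simplexSet m)) = ∞ := by
  show (if (∀ j, x.1 j ≠ 0) then _ else _) = _
  rw [if_neg h]

end Stmt13Aux

namespace Stmt13Aux

open Real Set Filter

variable (m : ℕ) [NeZero m]

lemma fmap_eq_infty_of_side (u : OnePoint (simplexSet m))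
    (h : u = ∞ ∨ ∃ x : simplexSet m, u = (x : OnePoint (simplexSet m)) ∧
        (x : ZMod m → ℝ) ∈ boundarySet m) : fmap m u = ∞ := by
  rcases h with rfl | ⟨x, rfl, hx⟩
  · rfl
  · refine fmap_coe_zero m x ?_
    obtain ⟨j, hj⟩ := hx.2
    exact fun hall => hall j hj

lemma fmap_respects : ∀ u u', collapseRel m u u' → fmap m u = fmap m u' := by
  rintro u u' ⟨h1, h2⟩
  rw [fmap_eq_infty_of_side m u h1, fmap_eq_infty_of_side m u' h2]

lemma mem_boundary (x : simplexSet m) (h : ¬ (∀ j, x.1 j ≠ 0)) :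
    (x : ZMod m → ℝ) ∈ boundarySet m := by
  push_neg at h
  obtain ⟨j, hj⟩ := h
  exact ⟨x.2, j, hj⟩

/-- the underlying equivalence -/
noncomputable def theEquiv : Quot (collapseRel m) ≃ OnePoint (sumZero m) where
  toFun := Quot.lift (fmap m) (fmap_respects m)
  invFun := fun w => w.elim (Quot.mk _ ∞)
    (fun v => Quot.mk _ ((smax m v : simplexSet m) : OnePoint (simplexSet m)))
  left_inv := by
    apply Quot.ind
    intro u
    induction u using OnePoint.rec with
    | infty => rfl
    | coe x =>
      by_cases h : ∀ j, x.1 j ≠ 0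
      · show (fmap m (x : OnePoint (simplexSet m))).elim _ _ = _
        rw [fmap_coe_pos m x h]
        show Quot.mk _ ((smax m (Lmap m x) : simplexSet m) : OnePoint (simplexSet m)) = _
        rw [smax_L m x h]
      · show (fmap m (x : OnePoint (simplexSet m))).elim _ _ = _
        rw [fmap_coe_zero m x h]
        exact Quot.sound ⟨Or.inl rfl, Or.inr ⟨x, rfl, mem_boundary m x h⟩⟩
  right_inv := by
    intro w
    induction w using OnePoint.rec with
    | infty => rfl
    | coe v =>
      show fmap m ((smax m v : simplexSet m) : OnePoint (simplexSet m)) = _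
      rw [fmap_coe_pos m _ (smax_pos m v), L_smax m v]

end Stmt13Aux

namespace Stmt13Aux

open Real Set Filter Bornology

variable (m : ℕ) [NeZero m]

lemma isClosed_simplex : IsClosed (simplexSet m) := by
  have h1 : IsClosed {v : ZMod m → ℝ | ∀ j, 0 ≤ v j} := by
    have : {v : ZMod m → ℝ | ∀ j, 0 ≤ v j} = ⋂ j, {v | 0 ≤ v j} := by
      ext v; simp
    rw [this]
    exact isClosed_iInter fun j => isClosed_le continuous_const (continuous_apply j)
  have h2 : IsClosed {v : ZMod m → ℝ | ∑ j, v j = 1} :=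
    isClosed_eq (continuous_finset_sum _ fun i _ => continuous_apply i) continuous_const
  exact h1.inter h2

lemma isCompact_simplex : IsCompact (simplexSet m) := by
  refine Metric.isCompact_of_isClosed_isBounded (isClosed_simplex m) ?_
  rw [isBounded_iff_forall_norm_le]
  refine ⟨1, fun v hv => ?_⟩
  rw [pi_norm_le_iff_of_nonneg zero_le_one]
  intro j
  rw [Real.norm_eq_abs, abs_le]
  constructor
  · linarith [hv.1 j]
  · calc v j ≤ ∑ k, v k := Finset.single_le_sum (fun k _ => hv.1 k) (Finset.mem_univ j)
    _ = 1 := hv.2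

instance : CompactSpace (simplexSet m) := isCompact_iff_compactSpace.mp (isCompact_simplex m)

instance : WeaklyLocallyCompactSpace (sumZero m) := by
  have h : IsClosed {v : ZMod m → ℝ | ∑ j, v j = 0} :=
    isClosed_eq (continuous_finset_sum _ fun i _ => continuous_apply i) continuous_const
  exact h.weaklyLocallyCompactSpace

example : T2Space (OnePoint (sumZero m)) := inferInstance
example : CompactSpace (Quot (collapseRel m)) := inferInstance

end Stmt13Aux

namespace Stmt13Aux

open Real Set Filter Bornology

variable (m : ℕ) [NeZero m]

lemma escape (C : ℝ) (x : simplexSet m) (hpos : ∀ j, x.1 j ≠ 0) (j0 : ZMod m)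
    (hj0 : x.1 j0 < Real.exp (-(2*C+1)) / m) : ∃ j, C < |Lfun m x.1 j| := by
  have hm := mpos m
  have hposs : ∀ j, 0 < x.1 j := fun j => lt_of_le_of_ne (x.2.1 j) (Ne.symm (hpos j))
  obtain ⟨jmax, -, hjmax⟩ : ∃ j ∈ Finset.univ, (1:ℝ)/m ≤ x.1 j := by
    apply Finset.exists_le_of_sum_le Finset.univ_nonempty
    rw [Finset.sum_const, Finset.card_univ, ZMod.card, nsmul_eq_mul, x.2.2,
      mul_one_div, div_self hm.ne']
  have hlogd : Real.log (Real.exp (-(2*C+1)) / m) = -(2*C+1) - Real.log m := by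
    rw [Real.log_div (Real.exp_ne_zero _) hm.ne', Real.log_exp]
  have h1 : Real.log (x.1 j0) < -(2*C+1) - Real.log m := by
    rw [← hlogd]; exact Real.log_lt_log (hposs j0) hj0
  have h2 : -Real.log m ≤ Real.log (x.1 jmax) := by
    have := Real.log_le_log (by positivity : (0:ℝ) < 1/m) hjmax
    rwa [one_div, Real.log_inv] at this
  have hdiff : Lfun m x.1 jmax - Lfun m x.1 j0
      = Real.log (x.1 jmax) - Real.log (x.1 j0) := by
    unfold Lfun; ring
  have key : 2*C+1 < Lfun m x.1 jmax - Lfun m x.1 j0 := by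
    rw [hdiff]; linarith
  by_cases hC : C < |Lfun m x.1 jmax|
  · exact ⟨jmax, hC⟩
  · push_neg at hC
    refine ⟨j0, ?_⟩
    have ha := le_abs_self (Lfun m x.1 jmax)
    have hb := neg_le_abs (Lfun m x.1 j0)
    linarith

lemma fmap_continuous : Continuous (fmap m) := by
  rw [continuous_iff_continuousAt]
  intro u
  induction u using OnePoint.rec with
  | infty =>
    rw [OnePoint.continuousAt_infty']
    have hbot : Filter.coclosedCompact (simplexSet m) = ⊥ := by
      rw [← Filter.empty_mem_iff_bot]
      have := hasBasis_coclosedCompact.mem_of_mem (i := (univ : Set (simplexSet m)))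
        ⟨isClosed_univ, isCompact_univ⟩
      rwa [compl_univ] at this
    rw [hbot]
    exact tendsto_bot
  | coe x =>
    rw [OnePoint.continuousAt_coe]
    by_cases h : ∀ j, x.1 j ≠ 0
    · -- interior point
      have hU : IsOpen {x' : simplexSet m | ∀ j, x'.1 j ≠ 0} := by
        have heq : {x' : simplexSet m | ∀ j, x'.1 j ≠ 0}
            = ⋂ j, (fun x' : simplexSet m => x'.1 j) ⁻¹' ({0}ᶜ) := by
          ext x'; simp
        rw [heq]
        exact isOpen_iInter_of_finite fun j =>
          isOpen_compl_singleton.preimage ((continuous_apply j).comp continuous_subtype_val)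
      have hev : ∀ k : ZMod m, ContinuousAt (fun x' : simplexSet m => x'.1 k) x := by
        intro k
        exact ((continuous_apply k).comp continuous_subtype_val).continuousAt
      have hlogk : ∀ k : ZMod m,
          ContinuousAt (fun x' : simplexSet m => Real.log (x'.1 k)) x := by
        intro k
        exact ContinuousAt.comp (g := Real.log) (f := fun x' : simplexSet m => x'.1 k)
          (Real.continuousAt_log (h k)) (hev k)
      have hsum : ContinuousAt (fun x' : simplexSet m => ∑ k, Real.log (x'.1 k)) x :=
        tendsto_finset_sum _ (fun k _ => hlogk k)
      have hLfun : ContinuousAt (fun x' : simplexSet m => Lfun m x'.1) x := by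
        rw [continuousAt_pi]
        intro j
        show ContinuousAt
          (fun x' : simplexSet m => Real.log (x'.1 j) - (∑ k, Real.log (x'.1 k)) / m) x
        exact (hlogk j).sub (hsum.div_const _)
      have hLm : ContinuousAt (Lmap m) x := hLfun.codRestrict _
      have hcoe : ContinuousAt
          (fun x' : simplexSet m => ((Lmap m x' : sumZero m) : OnePoint (sumZero m))) x :=
        (OnePoint.continuous_coe.continuousAt).comp hLm
      refine hcoe.congr ?_
      filter_upwards [hU.mem_nhds h] with x' hx'
      exact (fmap_coe_pos m x' hx').symm
    · -- boundary point
      push_neg at h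
      obtain ⟨j0, hj0⟩ := h
      have hfx : (fmap m ∘ (fun x : simplexSet m => (x : OnePoint (simplexSet m)))) x = ∞ :=
        fmap_coe_zero m x (by push_neg; exact ⟨j0, hj0⟩)
      unfold ContinuousAt
      rw [hfx, OnePoint.hasBasis_nhds_infty.tendsto_right_iff]
      rintro s ⟨hscl, hsc⟩
      obtain ⟨C, hC⟩ := isBounded_iff_forall_norm_le.mp
        ((hsc.image continuous_subtype_val).isBounded)
      have hd : (0:ℝ) < Real.exp (-(2*C+1)) / m := by
        have := mpos m; positivity
      have hWopen : IsOpen {x' : simplexSet m | x'.1 j0 < Real.exp (-(2*C+1)) / m} :=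
        isOpen_lt ((continuous_apply j0).comp continuous_subtype_val) continuous_const
      have hxW : x ∈ {x' : simplexSet m | x'.1 j0 < Real.exp (-(2*C+1)) / m} := by
        show x.1 j0 < _
        rw [hj0]; exact hd
      filter_upwards [hWopen.mem_nhds hxW] with x' hx'
      by_cases hin : ∀ j, x'.1 j ≠ 0
      · rw [Function.comp_apply, fmap_coe_pos m x' hin]
        refine mem_union_left _ ⟨Lmap m x', fun hmem => ?_, rfl⟩
        obtain ⟨j, hj⟩ := escape m C x' hin j0 hx'
        have h1 : ‖(Lmap m x').1‖ ≤ C := hC _ (mem_image_of_mem _ hmem)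
        have h2 : |Lfun m x'.1 j| ≤ ‖(Lmap m x').1‖ := by
          rw [← Real.norm_eq_abs]
          exact norm_le_pi_norm _ j
        linarith
      · rw [Function.comp_apply, fmap_coe_zero m x' hin]
        exact mem_union_right _ rfl

end Stmt13Aux

namespace Stmt13Aux

variable (m : ℕ) [NeZero m]

/-- the homeomorphism -/
noncomputable def theHomeo : Quot (collapseRel m) ≃ₜ OnePoint (sumZero m) :=
  Continuous.homeoOfEquivCompactToT2 (f := theEquiv m)
    (continuous_quot_lift (fmap_respects m) (fmap_continuous m))

lemma theHomeo_mk (u : OnePoint (simplexSet m)) :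
    theHomeo m (Quot.mk (collapseRel m) u) = fmap m u := rfl

end Stmt13Aux


/-- for m ≥ 1 there is a homeomorphism from the quotient Δ/∂Δ to the one-point
compactification of V = {v : ZMod m → ℝ | Σ v = 0}, equivariant for the cyclic actions
(a · v = (j ↦ v (j − a)) on Δ and on V, the point at infinity being fixed): the collapsed
point (the class of ∂Δ) is sent to ∞, and whenever y is the a-shift of x in Δ, either both x
and y are sent to ∞, or they are sent to finite points v, w of V with w the a-shift of v. -/
theorem stmt13 (m : ℕ) [NeZero m] (hm : 1 ≤ m) :
    ∃ h : Quot (collapseRel m) ≃ₜ OnePoint (sumZero m),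
      h (Quot.mk (collapseRel m) ∞) = ∞ ∧
      (∀ x : simplexSet m, (x : ZMod m → ℝ) ∈ boundarySet m →
        h (Quot.mk (collapseRel m) (x : OnePoint (simplexSet m))) = ∞) ∧
      (∀ (a : ZMod m) (x y : simplexSet m),
        ((y : ZMod m → ℝ) = fun j => (x : ZMod m → ℝ) (j - a)) →
        ((h (Quot.mk (collapseRel m) (x : OnePoint (simplexSet m))) = ∞ ∧
          h (Quot.mk (collapseRel m) (y : OnePoint (simplexSet m))) = ∞) ∨
         (∃ v w : sumZero m,
            h (Quot.mk (collapseRel m) (x : OnePoint (simplexSet m))) =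
              (v : OnePoint (sumZero m)) ∧
            h (Quot.mk (collapseRel m) (y : OnePoint (simplexSet m))) =
              (w : OnePoint (sumZero m)) ∧
            ∀ j, (w : ZMod m → ℝ) j = (v : ZMod m → ℝ) (j - a)))) := by
  open Stmt13Aux in
  refine ⟨theHomeo m, rfl, ?_, ?_⟩
  · intro x hbx
    rw [theHomeo_mk]
    exact fmap_eq_infty_of_side m _ (Or.inr ⟨x, rfl, hbx⟩)
  · intro a x y hyx
    by_cases hin : ∀ j, x.1 j ≠ 0
    · right
      have hiny : ∀ j, y.1 j ≠ 0 := by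
        intro j
        simp only [hyx]
        exact hin _
      refine ⟨Lmap m x, Lmap m y, ?_, ?_, ?_⟩
      · rw [theHomeo_mk]; exact fmap_coe_pos m x hin
      · rw [theHomeo_mk]; exact fmap_coe_pos m y hiny
      · intro j
        show Lfun m y.1 j = Lfun m x.1 (j - a)
        unfold Lfun
        simp only [hyx]
        rw [show (∑ k, Real.log (x.1 (k - a))) = ∑ k, Real.log (x.1 k) from
          Fintype.sum_equiv (Equiv.subRight a) _ _ fun k => rfl]
    · left
      push_neg at hin
      obtain ⟨j0, hj0⟩ := hin
      have hby : y.1 (j0 + a) = 0 := by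
        simp only [hyx]
        rw [add_sub_cancel_right]
        exact hj0
      constructor
      · rw [theHomeo_mk]
        exact fmap_eq_infty_of_side m _ (Or.inr ⟨x, rfl, x.2, j0, hj0⟩)
      · rw [theHomeo_mk]
        exact fmap_eq_infty_of_side m _ (Or.inr ⟨y, rfl, y.2, j0 + a, hby⟩)
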